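/- Under the GDINA model on K = 3 attributes with the linear hierarchy allowed profiles {(0,0,0),(1,0,0),(1,1,0),(1,1,1)}, the q-vectors q = (0,1,0) and q' = (1,1,0) are NOT equivalent in general: there exist valid GDINA parameters (β'_0, β'_1, β'_2, β'_{12} with β'_1 > 0) such that the item parameter vector (θ_{α}) over allowed profiles induced by q' cannot be realized by any GDINA parameters (β_0, β_2) for q. Specifically, q' distinguishes profiles (0,0,0) and (1,0,0) whenever β'_1 ≠ 0, while q assigns them equal item parameters for all parameter choices. -/

import Mathlib

/-- Under the GDINA model on K = 3 with linear-hierarchy allowed profiles,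
q = (0,1,0) and q' = (1,1,0) are not equivalent: there exist valid GDINA
parameters for q' (with β'₁ > 0) whose item parameter vector over the allowed
profiles is realized by no GDINA parameters (β₀, β₂) for q.  Indeed q'
distinguishes (0,0,0) from (1,0,0) whenever β'₁ ≠ 0, while q never does. -/
theorem stmt_10 :
    (∃ β'0 β'1 β'2 β'12 : ℝ, 0 < β'1 ∧
      ∀ β0 β2 : ℝ, ¬ (∀ α ∈ ({![false, false, false], ![true, false, false],
          ![true, true, false], ![true, true, true]} : Set (Fin 3 → Bool)),
        β0 + β2 * (if α 1 then (1 : ℝ) else 0) =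
          β'0 + β'1 * (if α 0 then (1 : ℝ) else 0)
            + β'2 * (if α 1 then (1 : ℝ) else 0)
            + β'12 * ((if α 0 then (1 : ℝ) else 0) *
                (if α 1 then (1 : ℝ) else 0)))) ∧
    (∀ β'0 β'1 β'2 β'12 : ℝ, β'1 ≠ 0 →
      (β'0 + β'1 * (0 : ℝ) + β'2 * 0 + β'12 * (0 * 0)) ≠
        (β'0 + β'1 * (1 : ℝ) + β'2 * 0 + β'12 * (1 * 0))) ∧
    (∀ β0 β2 : ℝ,
      β0 + β2 * (0 : ℝ) = β0 + β2 * (0 : ℝ)) := by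
  refine ⟨⟨0, 1, 0, 0, one_pos, fun β0 β2 h => ?_⟩, fun _ _ _ _ h => by simpa using h,
    fun _ _ => rfl⟩
  -- q gives (0,0,0) and (1,0,0) the same parameter β0, while q' separates them by β'1 = 1.
  have at_000 := h ![false, false, false] (by simp)
  have at_100 := h ![true, false, false] (by simp)
  simp only [Fin.isValue, Matrix.cons_val_one, Matrix.cons_val_zero, Bool.false_eq_true,
    ↓reduceIte, mul_zero, add_zero, mul_one, zero_add] at at_000 at_100
  linarith
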